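/- Let M be a free k[[X]]-module of rank h over the power series ring over a field k, let N ⊆ M be a direct summand of rank d, and let L̄ ⊆ M ⊗_{k[[X]]} k be a k-subspace of dimension l. Then there exists a direct summand L ⊆ M of rank l lifting L̄ (i.e. L ⊗ k = L̄) such that the rank of (L ∩ N) ⊗_{k[[X]]} k((X)) equals max(0, l + d − h). -/

import Mathlib

open PowerSeries Matrix

section Aux

variable {k : Type*} [Field k] {h : ℕ}

/-- sum of smul of Pi.single -/
lemma sum_smul_single {n : Type*} [Fintype n] [DecidableEq n] {A : Type*} [Semiring A]
    (c : n → A) : ∑ j, c j • (Pi.single j (1 : A) : n → A) = c := by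
  funext t
  rw [Finset.sum_apply]
  simp [Pi.single_apply]

/-- the constant-coefficient reduction map, as a `k`-linear map -/
noncomputable def rhoL (k : Type*) [Field k] (h : ℕ) :
    (Fin h → PowerSeries k) →ₗ[k] (Fin h → k) where
  toFun := fun m i => PowerSeries.constantCoeff (R := k) (m i)
  map_add' := by intro x y; funext i; simp
  map_smul' := by
    intro a x; funext i
    simp [Pi.smul_apply, PowerSeries.smul_eq_C_mul]

lemma rhoL_Rsmul (f : PowerSeries k) (x : Fin h → PowerSeries k) :
    rhoL k h (f • x) = PowerSeries.constantCoeff (R := k) f • rhoL k h x := by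
  funext i
  simp [rhoL, Pi.smul_apply, smul_eq_mul]

lemma rhoL_X_smul (x : Fin h → PowerSeries k) :
    rhoL k h ((PowerSeries.X : PowerSeries k) • x) = 0 := by
  rw [rhoL_Rsmul]; simp

end Aux

section Aux2

variable {k : Type*} [Field k] {h : ℕ}

lemma rho_linearIndependent {ι : Type*} [Fintype ι]
    (b : Module.Basis ι (PowerSeries k) (Fin h → PowerSeries k)) :
    LinearIndependent k (fun i => rhoL k h (b i)) := by
  classical
  rw [Fintype.linearIndependent_iff]
  intro c hc
  set x : Fin h → PowerSeries k := ∑ i, PowerSeries.C (R := k) (c i) • b i with hx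
  have hrx : rhoL k h x = 0 := by
    rw [hx, map_sum]
    have : ∀ i, rhoL k h (PowerSeries.C (R := k) (c i) • b i) = c i • rhoL k h (b i) := by
      intro i; rw [rhoL_Rsmul]; simp
    rw [Finset.sum_congr rfl fun i _ => this i, hc]
  have hdvd : ∀ t, (PowerSeries.X : PowerSeries k) ∣ x t := by
    intro t
    rw [PowerSeries.X_dvd_iff]
    exact congrFun hrx t
  choose y hy using hdvd
  have hxy : x = (PowerSeries.X : PowerSeries k) • y := by
    funext t; rw [Pi.smul_apply, smul_eq_mul]; exact hy t
  have hrepr : ∀ i, PowerSeries.C (R := k) (c i) = PowerSeries.X * b.repr y i := by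
    intro i
    have h1 : ⇑(b.repr x) = fun i => PowerSeries.C (R := k) (c i) := by
      rw [hx]; exact b.repr_sum_self _
    have h2 : b.repr x = (PowerSeries.X : PowerSeries k) • b.repr y := by rw [hxy, _root_.map_smul]
    have := congrFun h1 i
    rw [h2] at this
    simpa [Finsupp.smul_apply, smul_eq_mul] using this.symm
  intro i
  have := congrArg (PowerSeries.constantCoeff (R := k)) (hrepr i)
  simpa using this

lemma rho_span {ι : Type*} [Fintype ι]
    (b : Module.Basis ι (PowerSeries k) (Fin h → PowerSeries k)) :
    ⊤ ≤ Submodule.span k (Set.range fun i => rhoL k h (b i)) := by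
  intro y _
  set x : Fin h → PowerSeries k := fun t => PowerSeries.C (R := k) (y t) with hxdef
  have hyx : y = rhoL k h x := by funext t; simp [rhoL, hxdef]
  have hxsum : x = ∑ i, b.repr x i • b i := (b.sum_repr x).symm
  have : y = ∑ i, (PowerSeries.constantCoeff (R := k) (b.repr x i)) • rhoL k h (b i) := by
    rw [hyx]
    conv_lhs => rw [hxsum]
    rw [map_sum]
    exact Finset.sum_congr rfl fun i _ => rhoL_Rsmul _ _
  rw [this]
  exact Submodule.sum_mem _ fun i _ =>
    Submodule.smul_mem _ _ (Submodule.subset_span ⟨i, rfl⟩)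

/-- reduction of a basis of `R^h` is a basis of `k^h` -/
noncomputable def rbasis {ι : Type*} [Fintype ι]
    (b : Module.Basis ι (PowerSeries k) (Fin h → PowerSeries k)) :
    Module.Basis ι k (Fin h → k) :=
  Module.Basis.mk (rho_linearIndependent b) (rho_span b)

lemma rbasis_apply {ι : Type*} [Fintype ι]
    (b : Module.Basis ι (PowerSeries k) (Fin h → PowerSeries k)) (i : ι) :
    rbasis b i = rhoL k h (b i) := by
  simp [rbasis]

end Aux2

section AuxL

variable {k : Type*} [Field k] {h : ℕ}

/-- All the "L is a nice direct summand" facts, from the data of a family `g` reducing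
to (the coercion of) a basis of `Lbar`. -/
lemma aux_L {l : ℕ} (Lbar : Submodule k (Fin h → k)) (w : Module.Basis (Fin l) k Lbar)
    (g : Fin l → (Fin h → PowerSeries k))
    (hg : ∀ j, rhoL k h (g j) = (w j : Fin h → k)) :
    LinearIndependent (PowerSeries k) g ∧
    (∃ P, IsCompl (Submodule.span (PowerSeries k) (Set.range g)) P) ∧
    ((fun (m : Fin h → PowerSeries k) (i : Fin h) => PowerSeries.constantCoeff (R := k) (m i)) ''
        (Submodule.span (PowerSeries k) (Set.range g) : Set (Fin h → PowerSeries k))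
      = (Lbar : Set (Fin h → k))) := by
  classical
  obtain ⟨Lc, hLc⟩ := Submodule.exists_isCompl Lbar
  set φb : (Fin h → k) →ₗ[k] (Fin l → k) :=
    (w.equivFun.toLinearMap).comp (Lbar.projectionOnto Lc hLc) with hφb
  have hφu : ∀ j, φb ((w j : Fin h → k)) = Pi.single j 1 := by
    intro j
    rw [hφb]
    simp only [LinearMap.comp_apply, Submodule.projectionOnto_apply_left]
    funext t
    simp [Module.Basis.equivFun_self, Pi.single_apply, eq_comm]
  have hdecomp : ∀ (y : Fin h → k), φb y = ∑ i, y i • φb (Pi.single i 1) := by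
    intro y
    conv_lhs => rw [show y = ∑ i, y i • (Pi.single i (1:k) : Fin h → k) from
      (sum_smul_single y).symm]
    rw [map_sum]
    exact Finset.sum_congr rfl fun i _ => (map_smul φb _ _)
  set F : Matrix (Fin l) (Fin h) (PowerSeries k) :=
    Matrix.of fun j i => PowerSeries.C (R := k) (φb (Pi.single i 1) j) with hF
  set Φ : (Fin h → PowerSeries k) →ₗ[PowerSeries k] (Fin l → PowerSeries k) :=
    F.mulVecLin with hΦ
  have hΦρ : ∀ x j, PowerSeries.constantCoeff (R := k) (Φ x j) = φb (rhoL k h x) j := by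
    intro x j
    rw [hΦ]
    simp only [Matrix.mulVecLin_apply, Matrix.mulVec, dotProduct, hF, Matrix.of_apply]
    rw [map_sum]
    rw [hdecomp (rhoL k h x)]
    rw [Finset.sum_apply]
    refine Finset.sum_congr rfl fun i _ => ?_
    rw [_root_.map_mul, PowerSeries.constantCoeff_C]
    simp only [Pi.smul_apply, smul_eq_mul]
    rw [mul_comm]
    rfl
  set B : Matrix (Fin l) (Fin l) (PowerSeries k) :=
    Matrix.of fun i j => Φ (g i) j with hB
  have hBbar : B.map (PowerSeries.constantCoeff (R := k)) = 1 := by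
    ext i j
    rw [Matrix.map_apply, hB, Matrix.of_apply, hΦρ, hg i, hφu i]
    rw [Matrix.one_apply, Pi.single_apply]
    simp [eq_comm]
  have hBdet : IsUnit B.det := by
    rw [PowerSeries.isUnit_iff_constantCoeff]
    have : PowerSeries.constantCoeff (R := k) B.det = (B.map (PowerSeries.constantCoeff (R := k))).det :=
      RingHom.map_det _ _
    rw [this, hBbar, Matrix.det_one]
    exact isUnit_one
  have hBTdet : IsUnit (Bᵀ).det := by rwa [Matrix.det_transpose]
  set θ : (Fin h → PowerSeries k) →ₗ[PowerSeries k] (Fin l → PowerSeries k) :=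
    (Bᵀ)⁻¹.mulVecLin ∘ₗ Φ with hθ
  have hΦg : ∀ i, Φ (g i) = Bᵀ.mulVec (Pi.single i 1) := by
    intro i
    funext j
    rw [Matrix.mulVec_single]
    simp [hB, Matrix.transpose_apply]
  have hθg : ∀ i, θ (g i) = Pi.single i 1 := by
    intro i
    rw [hθ]
    simp only [LinearMap.comp_apply, Matrix.mulVecLin_apply]
    rw [hΦg i, Matrix.mulVec_mulVec, Matrix.nonsing_inv_mul _ hBTdet, Matrix.one_mulVec]
  -- linear independence
  have hgli : LinearIndependent (PowerSeries k) g := by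
    rw [Fintype.linearIndependent_iff]
    intro c hc
    have h0 : θ (∑ j, c j • g j) = 0 := by rw [hc, map_zero]
    rw [map_sum] at h0
    have : ∀ j, θ (c j • g j) = c j • (Pi.single j 1 : Fin l → PowerSeries k) := by
      intro j; rw [_root_.map_smul, hθg]
    rw [Finset.sum_congr rfl fun j _ => this j, sum_smul_single] at h0
    exact fun i => congrFun h0 i
  refine ⟨hgli, ?_, ?_⟩
  · -- IsCompl
    set q : (Fin h → PowerSeries k) →ₗ[PowerSeries k] (Fin h → PowerSeries k) :=
      ∑ j, ((LinearMap.proj j).comp θ).smulRight (g j) with hqdef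
    have hq : ∀ x, q x = ∑ j, θ x j • g j := by
      intro x
      rw [hqdef]
      simp [LinearMap.sum_apply, LinearMap.smulRight_apply]
    have hqL : ∀ x, q x ∈ Submodule.span (PowerSeries k) (Set.range g) := by
      intro x
      rw [hq]
      exact Submodule.sum_mem _ fun j _ =>
        Submodule.smul_mem _ _ (Submodule.subset_span ⟨j, rfl⟩)
    have hfix : ∀ y ∈ Submodule.span (PowerSeries k) (Set.range g), q y = y := by
      intro y hy
      refine Submodule.span_induction ?_ ?_ ?_ ?_ hy
      · rintro y ⟨j, rfl⟩
        rw [hq]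
        have : ∀ t, θ (g j) t • g t = if t = j then g j else 0 := by
          intro t
          rw [hθg j, Pi.single_apply]
          by_cases ht : t = j <;> simp [ht]
        rw [Finset.sum_congr rfl fun t _ => this t, Finset.sum_ite_eq',
          if_pos (Finset.mem_univ j)]
      · simp
      · intro a b _ _ ha hb; rw [map_add, ha, hb]
      · intro r a _ ha; rw [_root_.map_smul, ha]
    refine ⟨LinearMap.ker (q.codRestrict (Submodule.span (PowerSeries k) (Set.range g)) hqL),
      LinearMap.isCompl_of_proj ?_⟩
    intro x
    exact Subtype.ext (hfix x x.2)
  · -- image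
    ext y
    constructor
    · rintro ⟨x, hx, rfl⟩
      have : ∀ z ∈ Submodule.span (PowerSeries k) (Set.range g), rhoL k h z ∈ Lbar := by
        intro z hz
        refine Submodule.span_induction ?_ ?_ ?_ ?_ hz
        · rintro z ⟨j, rfl⟩
          rw [hg j]; exact (w j).2
        · simp
        · intro a b _ _ ha hb; rw [map_add]; exact Lbar.add_mem ha hb
        · intro r a _ ha
          rw [rhoL_Rsmul]
          exact Lbar.smul_mem _ ha
      exact this x hx
    · intro hy
      have h1 := congrArg (Subtype.val) (w.sum_equivFun ⟨y, hy⟩)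
      refine ⟨∑ j, PowerSeries.C (R := k) (w.equivFun ⟨y, hy⟩ j) • g j, ?_, ?_⟩
      · exact Submodule.sum_mem _ fun j _ =>
          Submodule.smul_mem _ _ (Submodule.subset_span ⟨j, rfl⟩)
      · show rhoL k h (∑ j, PowerSeries.C (R := k) (w.equivFun ⟨y, hy⟩ j) • g j) = y
        rw [map_sum]
        have h2 : ∀ j, rhoL k h (PowerSeries.C (R := k) (w.equivFun ⟨y, hy⟩ j) • g j)
            = w.equivFun ⟨y, hy⟩ j • (w j : Fin h → k) := by
          intro j; rw [rhoL_Rsmul, hg j]; simp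
        rw [Finset.sum_congr rfl fun j _ => h2 j]
        simp only [Submodule.coe_sum, Submodule.coe_smul] at h1; exact h1
end AuxL

section AuxDet

variable {k : Type*} [Field k]

lemma aux_det {m : ℕ} (A₀ : Matrix (Fin m) (Fin m) k) :
    (Matrix.of fun i j => PowerSeries.C (R := k) (A₀ i j)
      + (if i = j then (PowerSeries.X : PowerSeries k) else 0)).det ≠ 0 := by
  classical
  set f : Polynomial k →+* PowerSeries k := Polynomial.coeToPowerSeries.ringHom with hf
  have hfX : f Polynomial.X = PowerSeries.X := by
    rw [hf, Polynomial.coeToPowerSeries.ringHom_apply, Polynomial.coe_X]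
  have hfC : ∀ a : k, f (Polynomial.C a) = PowerSeries.C (R := k) a := by
    intro a
    rw [hf, Polynomial.coeToPowerSeries.ringHom_apply, Polynomial.coe_C]
  have hinj : Function.Injective f := by
    intro p q hpq
    apply Polynomial.coe_injective
    exact hpq
  have hmap : (charmatrix (-A₀)).map f = Matrix.of fun i j => PowerSeries.C (R := k) (A₀ i j)
      + (if i = j then (PowerSeries.X : PowerSeries k) else 0) := by
    refine Matrix.ext fun i j => ?_
    rw [Matrix.map_apply]
    by_cases hij : i = j
    · subst hij
      rw [charmatrix_apply_eq, map_sub, hfX, Matrix.neg_apply, hfC, map_neg, Matrix.of_apply,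
        if_pos rfl]
      ring
    · rw [charmatrix_apply_ne _ _ _ hij, map_neg, Matrix.neg_apply, hfC, map_neg, neg_neg,
        Matrix.of_apply, if_neg hij, add_zero]
  have hdet : (Matrix.of fun i j => PowerSeries.C (R := k) (A₀ i j)
      + (if i = j then (PowerSeries.X : PowerSeries k) else 0)).det
      = f ((charmatrix (-A₀)).det) := by
    rw [← hmap, ← RingHom.mapMatrix_apply, ← RingHom.map_det]
  rw [hdet]
  have h1 : (charmatrix (-A₀)).det = (-A₀).charpoly := rfl
  rw [h1]
  intro h0
  exact (Matrix.charpoly_monic (-A₀)).ne_zero (hinj (by rw [h0, map_zero]))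

lemma aux_vecmul {m : ℕ} {A : Type*} [CommRing A] [IsDomain A]
    (D : Matrix (Fin m) (Fin m) A) (hD : D.det ≠ 0) (c : Fin m → A)
    (hc : Matrix.vecMul c D = 0) : c = 0 := by
  classical
  have h1 : Matrix.vecMul c (D * D.adjugate) = 0 := by
    rw [← Matrix.vecMul_vecMul, hc, Matrix.zero_vecMul]
  rw [Matrix.mul_adjugate] at h1
  have h2 : ∀ i, D.det * c i = 0 := by
    intro i
    have h3 := congrFun h1 i
    simp only [Matrix.vecMul, dotProduct, Matrix.smul_apply, Matrix.one_apply,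
      smul_eq_mul, mul_ite, mul_one, mul_zero, Pi.zero_apply, Finset.sum_ite_eq',
      Finset.mem_univ, if_true] at h3
    rw [mul_comm] at h3
    exact h3
  funext i
  rcases mul_eq_zero.mp (h2 i) with hcase | hcase
  · exact absurd hcase hD
  · exact hcase

end AuxDet

set_option maxHeartbeats 1000000 in
set_option synthInstance.maxHeartbeats 1000000 in
/-- Lemma lift_L, case r = 1: Let `M` be a free `k[[X]]`-module of rank `h`
(here `M = (Fin h → k[[X]])`), `N ⊆ M` a direct summand of rank `d`, `L̄` a `k`-subspace
of `M ⊗ k = (Fin h → k)` of dimension `l`. Then there is a direct summand `L ⊆ M` of rank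
`l` lifting `L̄` (its reduction mod `X`, via the constant-coefficient map, is `L̄`) such
that the generic rank of `L ∩ N` (its rank over the domain `k[[X]]`, which equals the
`k((X))`-dimension of `(L ∩ N) ⊗ k((X))`) is `max(0, l + d − h)` (truncated ℕ
subtraction). -/
theorem stmt_5 (k : Type*) [Field k] (h d l : ℕ)
    (N : Submodule (PowerSeries k) (Fin h → PowerSeries k))
    (hNsum : ∃ N', IsCompl N N')
    (hNrank : Module.finrank (PowerSeries k) N = d)
    (Lbar : Submodule k (Fin h → k))
    (hLbar : Module.finrank k Lbar = l) :
    ∃ L : Submodule (PowerSeries k) (Fin h → PowerSeries k),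
      (∃ L', IsCompl L L') ∧
      Module.finrank (PowerSeries k) L = l ∧
      ((fun (m : Fin h → PowerSeries k) (i : Fin h) => PowerSeries.constantCoeff (R := k) (m i)) ''
        (L : Set (Fin h → PowerSeries k)) = (Lbar : Set (Fin h → k))) ∧
      Module.finrank (PowerSeries k) ↥(L ⊓ N) = l + d - h := by
  classical
  obtain ⟨N', hNc⟩ := hNsum
  obtain ⟨d', nb⟩ := Submodule.basisOfPid (Pi.basisFun (PowerSeries k) (Fin h)) N
  obtain ⟨c', n'b⟩ := Submodule.basisOfPid (Pi.basisFun (PowerSeries k) (Fin h)) N'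
  have hd' : d' = d := by
    rw [← hNrank, Module.finrank_eq_card_basis nb, Fintype.card_fin]
  -- adapted basis
  set e : Module.Basis (Fin d' ⊕ Fin c') (PowerSeries k) (Fin h → PowerSeries k) :=
    (nb.prod n'b).map (Submodule.prodEquivOfIsCompl N N' hNc) with he
  have he_inl : ∀ i, e (Sum.inl i) = (nb i : Fin h → PowerSeries k) := by
    intro i
    simp [he, Submodule.coe_prodEquivOfIsCompl']
  have hh : h = d' + c' := by
    have h1 : Module.finrank (PowerSeries k) (Fin h → PowerSeries k) = h := by
      rw [Module.finrank_eq_card_basis (Pi.basisFun (PowerSeries k) (Fin h)), Fintype.card_fin]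
    rw [← h1, Module.finrank_eq_card_basis e]
    simp
  -- reduced basis
  set eb : Module.Basis (Fin d' ⊕ Fin c') k (Fin h → k) := rbasis e with heb
  -- basis of Lbar
  set w : Module.Basis (Fin l) k Lbar := Module.finBasisOfFinrankEq k Lbar hLbar with hw
  -- the family g
  set v : Fin l → (Fin h → PowerSeries k) :=
    fun j => ∑ i, PowerSeries.C (R := k) (eb.repr (w j : Fin h → k) i) • e i with hv
  set z : Fin l → (Fin h → PowerSeries k) :=
    fun j => if hj : (j : ℕ) < c' then e (Sum.inr ⟨(j : ℕ), hj⟩) else 0 with hz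
  set g : Fin l → (Fin h → PowerSeries k) :=
    fun j => v j + (PowerSeries.X : PowerSeries k) • z j with hgdef
  have hrg : ∀ j, rhoL k h (g j) = ((w j : Fin h → k)) := by
    intro j
    have hgj : g j = v j + (PowerSeries.X : PowerSeries k) • z j := rfl
    rw [hgj, map_add, rhoL_X_smul, add_zero]
    have hvj : v j = ∑ i, PowerSeries.C (R := k) (eb.repr (w j : Fin h → k) i) • e i := rfl
    rw [hvj, map_sum]
    have hterm : ∀ i, rhoL k h (PowerSeries.C (R := k) (eb.repr (w j : Fin h → k) i) • e i)
        = eb.repr (w j : Fin h → k) i • eb i := by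
      intro i
      rw [rhoL_Rsmul, PowerSeries.constantCoeff_C, heb, rbasis_apply]
    rw [Finset.sum_congr rfl fun i _ => hterm i]
    exact eb.sum_repr ((w j : Fin h → k))
  obtain ⟨hgli, hcompl, himg⟩ := aux_L Lbar w g hrg
  -- the projection with kernel N
  set π : (Fin h → PowerSeries k) →ₗ[PowerSeries k] (Fin c' → PowerSeries k) :=
    LinearMap.pi (fun t => (Finsupp.lapply (Sum.inr t)).comp e.repr.toLinearMap) with hπ
  have hπ_apply : ∀ x t, π x t = e.repr x (Sum.inr t) := by
    intro x t
    rw [hπ]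
    simp [LinearMap.pi_apply, Finsupp.lapply_apply]
  have hπe_inl : ∀ i, π (e (Sum.inl i)) = 0 := by
    intro i
    funext t
    rw [hπ_apply]
    simp [Module.Basis.repr_self, Finsupp.single_apply]
  have hπe_inr : ∀ s, π (e (Sum.inr s)) = Pi.single s 1 := by
    intro s
    funext t
    rw [hπ_apply]
    simp [Module.Basis.repr_self, Finsupp.single_apply, Pi.single_apply, eq_comm]
  have hkerπ : LinearMap.ker π = N := by
    have hNspan : N = Submodule.span (PowerSeries k) (Set.range fun i => e (Sum.inl i)) := by
      have h2 : Submodule.map N.subtype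
          (Submodule.span (PowerSeries k) (Set.range nb)) = N := by
        rw [Module.Basis.span_eq, Submodule.map_top, Submodule.range_subtype]
      rw [← h2, Submodule.map_span, ← Set.range_comp]
      exact congrArg _ (congrArg Set.range (funext fun i => (he_inl i).symm))
    have hmem : ∀ x, x ∈ LinearMap.ker π ↔
        x ∈ Submodule.span (PowerSeries k) (Set.range fun i => e (Sum.inl i)) := by
      intro x
      rw [LinearMap.mem_ker]
      have himg2 : (Set.range fun i => e (Sum.inl i)) = ⇑e '' (Set.range Sum.inl) := by
        rw [← Set.range_comp]; rfl
      rw [himg2, Module.Basis.mem_span_image]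
      constructor
      · intro h0 i hi
        rcases i with a | t
        · exact ⟨a, rfl⟩
        · exfalso
          have h1 : e.repr x (Sum.inr t) = 0 := by
            rw [← hπ_apply]; rw [h0]; rfl
          exact (Finsupp.mem_support_iff.mp hi) h1
      · intro hsupp
        funext t
        rw [hπ_apply]
        by_contra h1
        exact (by rintro ⟨a, ha⟩; exact Sum.inl_ne_inr ha :
          Sum.inr t ∉ Set.range Sum.inl) (hsupp (Finsupp.mem_support_iff.mpr h1))
    rw [hNspan]
    ext x
    exact hmem x
  -- computation of π (g j)
  have hπv : ∀ j, π (v j)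
      = fun t => PowerSeries.C (R := k) (eb.repr (w j : Fin h → k) (Sum.inr t)) := by
    intro j
    have hvj : v j = ∑ i, PowerSeries.C (R := k) (eb.repr (w j : Fin h → k) i) • e i := rfl
    rw [hvj, map_sum, Fintype.sum_sum_type]
    have hzero : ∑ i : Fin d',
        π (PowerSeries.C (R := k) (eb.repr (w j : Fin h → k) (Sum.inl i)) • e (Sum.inl i)) = 0 := by
      refine Finset.sum_eq_zero fun i _ => ?_
      rw [_root_.map_smul, hπe_inl, smul_zero]
    rw [hzero, zero_add]
    have hterm : ∀ s : Fin c',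
        π (PowerSeries.C (R := k) (eb.repr (w j : Fin h → k) (Sum.inr s)) • e (Sum.inr s))
        = PowerSeries.C (R := k) (eb.repr (w j : Fin h → k) (Sum.inr s))
            • (Pi.single s 1 : Fin c' → PowerSeries k) := by
      intro s
      rw [_root_.map_smul, hπe_inr]
    rw [Finset.sum_congr rfl fun s _ => hterm s]
    exact sum_smul_single fun s => PowerSeries.C (R := k) (eb.repr (w j : Fin h → k) (Sum.inr s))
  set m' : ℕ := min l c' with hm'
  have hmle_l : m' ≤ l := min_le_left _ _
  have hmle_c : m' ≤ c' := min_le_right _ _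
  have hπg : ∀ (j : Fin m'), π (g (Fin.castLE hmle_l j))
      = (fun t => PowerSeries.C (R := k) (eb.repr ((w (Fin.castLE hmle_l j) : Fin h → k)) (Sum.inr t)))
        + (PowerSeries.X : PowerSeries k) • (Pi.single (Fin.castLE hmle_c j) 1 : Fin c' → PowerSeries k) := by
    intro j
    have hgj : g (Fin.castLE hmle_l j) = v (Fin.castLE hmle_l j)
        + (PowerSeries.X : PowerSeries k) • z (Fin.castLE hmle_l j) := rfl
    rw [hgj, map_add, _root_.map_smul, hπv]
    congr 1
    have hlt : ((Fin.castLE hmle_l j : Fin l) : ℕ) < c' := lt_of_lt_of_le j.2 hmle_c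
    have hzj : z (Fin.castLE hmle_l j) = e (Sum.inr ⟨((Fin.castLE hmle_l j : Fin l) : ℕ), hlt⟩) := by
      show (if hj : ((Fin.castLE hmle_l j : Fin l) : ℕ) < c' then _ else _) = _
      rw [dif_pos hlt]
    rw [hzj, hπe_inr]
    congr 1
  have hDdet : (Matrix.of (fun j t => π (g (Fin.castLE hmle_l j)) (Fin.castLE hmle_c t)) :
      Matrix (Fin m') (Fin m') (PowerSeries k)).det ≠ 0 := by
    have hDform : (Matrix.of (fun j t => π (g (Fin.castLE hmle_l j)) (Fin.castLE hmle_c t)) :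
        Matrix (Fin m') (Fin m') (PowerSeries k))
        = Matrix.of fun i j => PowerSeries.C (R := k)
            (eb.repr ((w (Fin.castLE hmle_l i) : Fin h → k)) (Sum.inr (Fin.castLE hmle_c j)))
          + (if i = j then (PowerSeries.X : PowerSeries k) else 0) := by
      refine Matrix.ext fun j t => ?_
      rw [Matrix.of_apply, Matrix.of_apply, hπg j]
      rw [Pi.add_apply, Pi.smul_apply, Pi.single_apply]
      by_cases hjt : j = t
      · subst hjt
        simp
      · have : Fin.castLE hmle_c t ≠ Fin.castLE hmle_c j := by
          intro hcontra
          have h5 := congrArg Fin.val hcontra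
          exact hjt (Fin.ext (by simpa using h5.symm))
        rw [if_neg this, if_neg hjt, smul_zero, add_zero]
    rw [hDform]
    exact aux_det _
  have hTli : LinearIndependent (PowerSeries k)
      (fun j : Fin m' => π (g (Fin.castLE hmle_l j))) := by
    rw [Fintype.linearIndependent_iff]
    intro cc hcc
    have hvm : Matrix.vecMul cc
        (Matrix.of (fun j t => π (g (Fin.castLE hmle_l j)) (Fin.castLE hmle_c t))) = 0 := by
      funext t
      have h1 := congrFun hcc (Fin.castLE hmle_c t)
      simp only [Finset.sum_apply, Pi.smul_apply, smul_eq_mul, Pi.zero_apply] at h1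
      simp only [Matrix.vecMul, dotProduct, Matrix.of_apply, Pi.zero_apply]
      exact h1
    have h2 := aux_vecmul _ hDdet cc hvm
    exact fun i => congrFun h2 i
  -- rank bookkeeping
  set L := Submodule.span (PowerSeries k) (Set.range g) with hL
  set T := π.domRestrict L with hT
  have hrankL : Module.rank (PowerSeries k) L = l := by
    rw [rank_eq_card_basis (Module.Basis.span hgli), Fintype.card_fin]
  have hrn := LinearMap.rank_range_add_rank_ker T
  have hrc : Module.rank (PowerSeries k) (LinearMap.range T) ≤ (c' : Cardinal) := by
    have h1 := Submodule.rank_le (LinearMap.range T)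
    rwa [rank_eq_card_basis (Pi.basisFun (PowerSeries k) (Fin c')), Fintype.card_fin] at h1
  have hrl : Module.rank (PowerSeries k) (LinearMap.range T) ≤ (l : Cardinal) := by
    rw [← hrankL, ← hrn]
    exact self_le_add_right _ _
  have hrm : (m' : Cardinal) ≤ Module.rank (PowerSeries k) (LinearMap.range T) := by
    have hmem : ∀ j : Fin m', π (g (Fin.castLE hmle_l j)) ∈ LinearMap.range T := by
      intro j
      exact ⟨⟨g (Fin.castLE hmle_l j), Submodule.subset_span ⟨_, rfl⟩⟩, rfl⟩
    have hli2 : LinearIndependent (PowerSeries k)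
        (fun j : Fin m' => (⟨π (g (Fin.castLE hmle_l j)), hmem j⟩ : LinearMap.range T)) := by
      apply LinearIndependent.of_comp (LinearMap.range T).subtype
      exact hTli
    have h3 := hli2.cardinal_lift_le_rank
    rw [Cardinal.mk_fintype, Fintype.card_fin] at h3
    simpa using h3
  have hrange : Module.rank (PowerSeries k) (LinearMap.range T) = (m' : Cardinal) := by
    refine le_antisymm ?_ hrm
    rcases le_total l c' with hlc | hlc
    · have hml : m' = l := by rw [hm']; omega
      rw [hml]; exact hrl
    · have hmc : m' = c' := by rw [hm']; omega
      rw [hmc]; exact hrc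
  have hkerlt : Module.rank (PowerSeries k) (LinearMap.ker T) < Cardinal.aleph0 := by
    refine lt_of_le_of_lt ?_ (Cardinal.nat_lt_aleph0 l)
    rw [← hrankL, ← hrn]
    exact le_add_self
  obtain ⟨nk, hnk⟩ := Cardinal.lt_aleph0.mp hkerlt
  have hnk2 : m' + nk = l := by
    have h1 : ((m' + nk : ℕ) : Cardinal) = (l : Cardinal) := by
      push_cast
      rw [← hnk, ← hrange]
      rw [hrn, hrankL]
    exact_mod_cast h1
  have hfker : Module.finrank (PowerSeries k) (LinearMap.ker T) = nk := by
    have h1 : Module.finrank (PowerSeries k) (LinearMap.ker T)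
        = Cardinal.toNat (Module.rank (PowerSeries k) (LinearMap.ker T)) := rfl
    rw [h1, hnk, Cardinal.toNat_natCast]
  have hkerT : LinearMap.ker T = Submodule.comap L.subtype (L ⊓ N) := by
    rw [hT, LinearMap.ker_domRestrict, hkerπ]
    ext x
    simp only [Submodule.mem_comap, Submodule.mem_inf]
    exact ⟨fun hx => ⟨x.2, hx⟩, fun hx => hx.2⟩
  have hfinal : Module.finrank (PowerSeries k) ↥(L ⊓ N) = nk := by
    rw [← hfker, hkerT]
    exact (Submodule.comapSubtypeEquivOfLe (inf_le_left : L ⊓ N ≤ L)).finrank_eq.symm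
  refine ⟨L, hcompl, ?_, himg, ?_⟩
  · rw [Module.finrank_eq_card_basis (Module.Basis.span hgli), Fintype.card_fin]
  · rw [hfinal]
    omega
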